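/- arXiv:1507.04778 — 2 statements merged into one kernel-verified Lean document; each statement's English description precedes it below -/
import Mathlib

section
/- Let G_F be a simple (undirected) graph on n vertices with Laplacian matrix L_F ∈ ℝ^{n×n}, and let Λ = diag(a_{10},…,a_{n0}) with each a_{i0} ∈ {0,1}. If every vertex i is connected in G_F (by a path, possibly of length zero) to some vertex j with a_{j0} = 1 — equivalently, if in the augmented directed graph obtained by adding a leader node 0 with an edge from 0 to each i having a_{i0} = 1, the leader has directed paths to all n vertices — then the leader-follower topology matrix H = L_F + Λ is symmetric positive definite. -/
/-!
Both `L_F` and `Λ` are positive semidefinite, so `H = L_F + Λ` is positive definite as soon as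
their kernels meet only in `0`. A vector in the kernel of `L_F` is constant on the connected
components of `G`, and a vector in the kernel of `Λ` vanishes at the vertices adjacent to the
leader; since every component contains such a vertex, the vector is zero.
-/

open Matrix
open scoped ComplexOrder

theorem Matrix.PosSemidef.add_posDef_of_mulVec_eq_zero {n 𝕜 : Type*} [Fintype n] [RCLike 𝕜]
    {A B : Matrix n n 𝕜} (hA : A.PosSemidef) (hB : B.PosSemidef)
    (hker : ∀ x, A *ᵥ x = 0 → B *ᵥ x = 0 → x = 0) : (A + B).PosDef := by
  refine posDef_iff_dotProduct_mulVec.mpr ⟨hA.isHermitian.add hB.isHermitian, fun x hx => ?_⟩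
  rw [add_mulVec, dotProduct_add]
  have hA₀ := hA.dotProduct_mulVec_nonneg x
  have hB₀ := hB.dotProduct_mulVec_nonneg x
  refine (add_nonneg hA₀ hB₀).lt_of_ne fun hsum => hx ?_
  obtain ⟨hAx, hBx⟩ := (add_eq_zero_iff_of_nonneg hA₀ hB₀).mp hsum.symm
  exact hker x ((hA.dotProduct_mulVec_zero_iff x).mp hAx) ((hB.dotProduct_mulVec_zero_iff x).mp hBx)

theorem SimpleGraph.posDef_lapMatrix_add_diagonal {V : Type*} [Fintype V] [DecidableEq V]
    (G : SimpleGraph V) [DecidableRel G.Adj] {a : V → ℝ} (ha : 0 ≤ a)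
    (hreach : ∀ i, ∃ j, G.Reachable i j ∧ a j ≠ 0) :
    (G.lapMatrix ℝ + diagonal a).PosDef := by
  refine (G.posSemidef_lapMatrix ℝ).add_posDef_of_mulVec_eq_zero (.diagonal ha)
    fun x hL hD => funext fun i => ?_
  obtain ⟨j, hij, hj⟩ := hreach i
  have hxj : a j * x j = 0 := by simpa [mulVec_diagonal] using congrFun hD j
  rw [G.lapMatrix_mulVec_eq_zero_iff_forall_reachable.mp hL i j hij,
    (mul_eq_zero.mp hxj).resolve_left hj, Pi.zero_apply]

/-- If, in the proximity graph `G` on `n` follower vertices,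
every vertex is connected (by a path, possibly trivial) to some vertex that is
adjacent to the leader (`a j = 1`), then the leader-follower topology matrix
`H = L_F + Λ` is symmetric positive definite. -/
theorem leaderFollowerMatrix_posDef
    (n : ℕ) (G : SimpleGraph (Fin n)) [DecidableRel G.Adj]
    (a : Fin n → ℝ) (ha : ∀ i, a i = 0 ∨ a i = 1)
    (hcon : ∀ i : Fin n, ∃ j : Fin n, G.Reachable i j ∧ a j = 1) :
    (G.lapMatrix ℝ + Matrix.diagonal a).PosDef := by
  have ha₀ : 0 ≤ a := fun i => by rcases ha i with h | h <;> simp [h]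
  refine G.posDef_lapMatrix_add_diagonal ha₀ fun i => ?_
  obtain ⟨j, hij, hj⟩ := hcon i
  exact ⟨j, hij, hj ▸ one_ne_zero⟩
end

section
/- Let q_i : ℝ → ℝ^p be differentiable for i = 0, 1, …, n, and for i ∈ {1,…,n}, j ∈ {0,1,…,n} let W_ij : ℝ^p → ℝ be differentiable functions satisfying W_ij(z) = W_ji(−z) for all z ∈ ℝ^p and all i, j ∈ {1,…,n}. Define V_2(t) = ½ Σ_{i=1}^n Σ_{j=1}^n W_ij(q_i(t) − q_j(t)) + Σ_{i=1}^n W_{i0}(q_i(t) − q_0(t)). Then V_2 is differentiable and V_2'(t) = Σ_{i=1}^n Σ_{j=0}^n ⟨ q̇_i(t) − q̇_0(t), ∇W_ij(q_i(t) − q_j(t)) ⟩ for all t, where ∇W_ij is the gradient of W_ij and ⟨·,·⟩ is the Euclidean inner product. -/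
/-! The chain rule gives each pair term the derivative `⟪q̇ᵢ - q̇ⱼ, ∇Wᵢⱼ(qᵢ - qⱼ)⟫`. Writing
`q̇ᵢ - q̇ⱼ = (q̇ᵢ - q̇₀) - (q̇ⱼ - q̇₀)` and using that `Wᵢⱼ(z) = Wⱼᵢ(-z)` makes the gradients
`∇Wᵢⱼ(qᵢ - qⱼ)` antisymmetric in `(i, j)`, so the two halves of the pair sum coincide, which
cancels the factor `1/2`. -/

open scoped RealInnerProductSpace

section Gradient

variable {E : Type*} [NormedAddCommGroup E] [InnerProductSpace ℝ E] [CompleteSpace E]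

theorem HasGradientAt.comp_hasDerivAt {f : E → ℝ} {g : E} {c : ℝ → E} {c' : E} {t : ℝ}
    (hf : HasGradientAt f g (c t)) (hc : HasDerivAt c c' t) :
    HasDerivAt (fun τ => f (c τ)) ⟪c', g⟫ t := by
  simpa [InnerProductSpace.toDual_apply_apply, real_inner_comm, Function.comp_def] using
    hf.hasFDerivAt.comp_hasDerivAt t hc

theorem HasGradientAt.comp_neg {f : E → ℝ} {g x : E} (hf : HasGradientAt f g (-x)) :
    HasGradientAt (fun y => f (-y)) (-g) x := by
  have hdual : (InnerProductSpace.toDual ℝ E g).comp (-ContinuousLinearMap.id ℝ E) =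
      InnerProductSpace.toDual ℝ E (-g) := by
    ext v
    simp [InnerProductSpace.toDual_apply_apply]
  rw [hasGradientAt_iff_hasFDerivAt, ← hdual]
  exact hf.hasFDerivAt.comp x (hasFDerivAt_id x).neg

theorem gradient_comp_neg {f : E → ℝ} {x : E} (hf : DifferentiableAt ℝ f (-x)) :
    gradient (fun y => f (-y)) x = -gradient f (-x) :=
  hf.hasGradientAt.comp_neg.gradient

end Gradient

theorem sum_inner_sub_of_antisymm {ι E : Type*} [Fintype ι] [NormedAddCommGroup E]
    [InnerProductSpace ℝ E] (v : ι → E) (G : ι → ι → E) (hG : ∀ i j, G j i = -G i j) :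
    ∑ i, ∑ j, ⟪v i - v j, G i j⟫ = 2 * ∑ i, ∑ j, ⟪v i, G i j⟫ := by
  have hswap : ∑ i, ∑ j, ⟪v j, G i j⟫ = -∑ i, ∑ j, ⟪v i, G i j⟫ := by
    rw [Finset.sum_comm, ← Finset.sum_neg_distrib]
    refine Finset.sum_congr rfl fun i _ => ?_
    rw [← Finset.sum_neg_distrib]
    exact Finset.sum_congr rfl fun j _ => by rw [hG, inner_neg_right]
  simp only [inner_sub_left, Finset.sum_sub_distrib, hswap]
  ring

/-- Let `q_i : ℝ → ℝᵖ` (`i = 0,…,n`, with `q₀` the leader) be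
differentiable and let the pairwise potentials `W_ij : ℝᵖ → ℝ` (as functions of the
relative position) be differentiable with `W_ij(z) = W_ji(−z)` for follower pairs.
Then the total potential
`V₂(t) = ½ Σᵢ Σⱼ W_ij(q_i − q_j) + Σᵢ W_i0(q_i − q₀)` is differentiable with
`V₂'(t) = Σᵢ Σ_{j=0}^n ⟨ q̇_i − q̇₀, ∇W_ij(q_i − q_j) ⟩`
(`⟪·, ·⟫` denotes the real inner product, `gradient` the gradient). -/
theorem deriv_total_potential
    (p n : ℕ)
    (q dq : Fin n → ℝ → EuclideanSpace ℝ (Fin p))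
    (q0 dq0 : ℝ → EuclideanSpace ℝ (Fin p))
    (hq : ∀ i t, HasDerivAt (q i) (dq i t) t)
    (hq0 : ∀ t, HasDerivAt q0 (dq0 t) t)
    (W : Fin n → Fin n → EuclideanSpace ℝ (Fin p) → ℝ)
    (W0 : Fin n → EuclideanSpace ℝ (Fin p) → ℝ)
    (hW : ∀ i j, Differentiable ℝ (W i j))
    (hW0 : ∀ i, Differentiable ℝ (W0 i))
    (hWsymm : ∀ i j z, W i j z = W j i (-z)) :
    ∀ t, HasDerivAt
      (fun τ => (1/2) * (∑ i, ∑ j, W i j (q i τ - q j τ)) + ∑ i, W0 i (q i τ - q0 τ))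
      (∑ i, ((∑ j, ⟪dq i t - dq0 t, gradient (W i j) (q i t - q j t)⟫)
          + ⟪dq i t - dq0 t, gradient (W0 i) (q i t - q0 t)⟫)) t := by
  intro t
  set v : Fin n → EuclideanSpace ℝ (Fin p) := fun i => dq i t - dq0 t
  set G : Fin n → Fin n → EuclideanSpace ℝ (Fin p) :=
    fun i j => gradient (W i j) (q i t - q j t)
  have hG : ∀ i j, G j i = -G i j := fun i j => by
    have hWji : W j i = fun z => W i j (-z) := funext (hWsymm j i)
    simp only [G, hWji, gradient_comp_neg ((hW i j) _), neg_sub]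
  have hpair : HasDerivAt (fun τ => ∑ i, ∑ j, W i j (q i τ - q j τ))
      (∑ i, ∑ j, ⟪v i - v j, G i j⟫) t :=
    HasDerivAt.fun_sum fun i _ => HasDerivAt.fun_sum fun j _ => by
      simpa only [v, sub_sub_sub_cancel_right] using
        ((hW i j) _).hasGradientAt.comp_hasDerivAt ((hq i t).fun_sub (hq j t))
  have hleader : HasDerivAt (fun τ => ∑ i, W0 i (q i τ - q0 τ))
      (∑ i, ⟪v i, gradient (W0 i) (q i t - q0 t)⟫) t :=
    HasDerivAt.fun_sum fun i _ =>
      ((hW0 i) _).hasGradientAt.comp_hasDerivAt ((hq i t).fun_sub (hq0 t))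
  refine ((hpair.const_mul (1/2 : ℝ)).add hleader).congr_deriv ?_
  rw [sum_inner_sub_of_antisymm v G hG, Finset.sum_add_distrib]
  ring
end
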